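/- Fix γ > 0 and a₁, a₂, a₃ ∈ ℝ with (a₁, a₂) ≠ (0, 0). For each integer n > 2 set r(n) = √(2γ/n), R(n) = (1/2) r(n)(a₁² + a₂² − r(n)² a₃²)^{1/2}, and α_n = cosh R(n) − i r(n)² a₃ · sinh R(n)/(2 R(n)). Then lim_{n→∞} n(α_n − 1) = (γ/4)(a₁² + a₂²) − i γ a₃. -/

import Mathlib

open Filter Topology Real

/-!
With `r = √(2γ/n) → 0` one has `R = (1/2) r √(a₁² + a₂² − r² a₃²) → 0` and
`n R² = (γ/2)(a₁² + a₂² − r² a₃²) → (γ/2)(a₁² + a₂²)`. Since `cosh x − 1 ~ x²/2` and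
`sinh x ~ x` at `0`, the real part `n (cosh R − 1)` tends to `(γ/4)(a₁² + a₂²)`, while
`n r² = 2γ` turns the imaginary part into `−γ a₃ sinh R / R → −γ a₃`.
-/

theorem Real.tendsto_sinh_div_self : Tendsto (fun x : ℝ => sinh x / x) (𝓝[≠] 0) (𝓝 1) := by
  simpa [slope_fun_def_field] using hasDerivAt_iff_tendsto_slope.mp (hasDerivAt_sinh 0)

theorem Real.cosh_sub_one_eq_two_mul_sinh_half_sq (x : ℝ) :
    cosh x - 1 = 2 * sinh (x / 2) ^ 2 := by
  have h := cosh_add (x / 2) (x / 2)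
  rw [add_halves] at h
  rw [h]
  linear_combination cosh_sq (x / 2)

theorem Real.tendsto_cosh_sub_one_div_sq :
    Tendsto (fun x : ℝ => (cosh x - 1) / x ^ 2) (𝓝[≠] 0) (𝓝 (1 / 2)) := by
  have hhalf : Tendsto (fun x : ℝ => x / 2) (𝓝[≠] 0) (𝓝[≠] 0) :=
    tendsto_nhdsWithin_iff.mpr
      ⟨((continuous_id.div_const 2).tendsto' 0 0 (zero_div 2)).mono_left nhdsWithin_le_nhds,
        eventually_nhdsWithin_of_forall fun x hx => div_ne_zero hx two_ne_zero⟩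
  have h := ((tendsto_sinh_div_self.comp hhalf).pow 2).const_mul (1 / 2)
  rw [one_pow, mul_one] at h
  refine h.congr fun x => ?_
  simp only [Function.comp_apply, cosh_sub_one_eq_two_mul_sinh_half_sq, div_pow]
  ring

theorem Filter.Tendsto.mul_cosh_sub_one {α : Type*} {l : Filter α} {u R : α → ℝ} {L : ℝ}
    (h : Tendsto (fun i => u i * R i ^ 2) l (𝓝 L)) (hR : Tendsto R l (𝓝[≠] 0)) :
    Tendsto (fun i => u i * (cosh (R i) - 1)) l (𝓝 (L / 2)) := by
  have h' := (tendsto_cosh_sub_one_div_sq.comp hR).mul h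
  rw [one_div_mul_eq_div] at h'
  refine h'.congr' ((tendsto_nhdsWithin_iff.mp hR).2.mono fun i (hi : R i ≠ 0) => ?_)
  simp only [Function.comp_apply]
  field_simp

section HalfMulSqrt

variable {α : Type*} {l : Filter α} {r : α → ℝ} {s b : ℝ}

theorem Filter.Tendsto.sqrt_sub_sq_mul (hr : Tendsto r l (𝓝 0)) :
    Tendsto (fun i => √(s - r i ^ 2 * b)) l (𝓝 √s) := by
  have h := ((hr.pow 2).mul_const b).const_sub s
  rw [zero_pow two_ne_zero, zero_mul, sub_zero] at h
  exact h.sqrt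

theorem Filter.Tendsto.half_mul_mul_sqrt_sub_sq_mul (hs : 0 < s) (hr : Tendsto r l (𝓝 0))
    (hr_ne : ∀ᶠ i in l, r i ≠ 0) :
    Tendsto (fun i => 1 / 2 * r i * √(s - r i ^ 2 * b)) l (𝓝[≠] 0) := by
  have hQ := hr.sqrt_sub_sq_mul (s := s) (b := b)
  refine tendsto_nhdsWithin_iff.mpr ⟨?_, ?_⟩
  · have h := (hr.const_mul (1 / 2)).mul hQ
    rwa [mul_zero, zero_mul] at h
  filter_upwards [hr_ne, hQ.eventually_ne (sqrt_ne_zero'.mpr hs)] with i hri hQi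
  exact mul_ne_zero (mul_ne_zero one_half_pos.ne' hri) hQi

theorem Filter.Tendsto.mul_sq_half_mul_mul_sqrt_sub_sq_mul {u : α → ℝ} {c : ℝ} (hs : 0 ≤ s)
    (hr : Tendsto r l (𝓝 0)) (hu : ∀ᶠ i in l, u i * r i ^ 2 = c) :
    Tendsto (fun i => u i * (1 / 2 * r i * √(s - r i ^ 2 * b)) ^ 2) l (𝓝 (c * s / 4)) := by
  have h := (hr.sqrt_sub_sq_mul (s := s) (b := b)).pow 2 |>.const_mul (c / 4)
  rw [sq_sqrt hs, div_mul_eq_mul_div] at h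
  refine h.congr' ?_
  filter_upwards [hu] with i hi
  linear_combination (-(√(s - r i ^ 2 * b) ^ 2 / 4)) * hi

end HalfMulSqrt

theorem natCast_mul_sub_I_mul_sq_mul_div_sub_one {n : ℕ} {γ r a C S y : ℝ}
    (hr : n * r ^ 2 = 2 * γ) :
    (n : ℂ) * ((C : ℂ) - Complex.I * (r : ℂ) ^ 2 * a * ((S / (2 * y) : ℝ) : ℂ) - 1)
      = ((n * (C - 1) : ℝ) : ℂ) - Complex.I * ((γ * a * (S / y) : ℝ) : ℂ) := by
  have hr' : (n : ℂ) * (r : ℂ) ^ 2 = 2 * γ := by exact_mod_cast hr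
  push_cast
  linear_combination (-(Complex.I * a * (S : ℂ) / (2 * y))) * hr'

/-- Key asymptotic in the contraction of the holomorphic discrete series of `SU(1,1)`
to the Bargmann–Fock representation of the Heisenberg group: with `r(n) = √(2γ/n)`,
`R(n) = (1/2) r(n) √(a₁² + a₂² − r(n)² a₃²)` and
`α_n = cosh R(n) − i r(n)² a₃ sinh R(n)/(2R(n))`, one has
`lim_n n(α_n − 1) = (γ/4)(a₁² + a₂²) − iγa₃`. -/
theorem su11_contraction_alpha_asymptotic (γ a₁ a₂ a₃ : ℝ) (hγ : 0 < γ)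
    (ha : (a₁, a₂) ≠ (0, 0))
    (r R : ℕ → ℝ) (α : ℕ → ℂ)
    (hr : ∀ n : ℕ, r n = Real.sqrt (2 * γ / n))
    (hR : ∀ n : ℕ, R n = (1 / 2) * r n * Real.sqrt (a₁ ^ 2 + a₂ ^ 2 - (r n) ^ 2 * a₃ ^ 2))
    (hα : ∀ n : ℕ, α n = ((Real.cosh (R n) : ℝ) : ℂ)
      - Complex.I * ((r n : ℝ) : ℂ) ^ 2 * (a₃ : ℂ)
        * ((Real.sinh (R n) / (2 * R n) : ℝ) : ℂ)) :
    Tendsto (fun n : ℕ => (n : ℂ) * (α n - 1)) atTop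
      (nhds ((((γ : ℂ)) / 4) * ((a₁ : ℂ) ^ 2 + (a₂ : ℂ) ^ 2)
        - Complex.I * (γ : ℂ) * (a₃ : ℂ))) := by
  have hs : 0 < a₁ ^ 2 + a₂ ^ 2 := by
    obtain h | h : a₁ ≠ 0 ∨ a₂ ≠ 0 := by contrapose! ha; simp [ha]
    all_goals positivity
  have hr0 : Tendsto r atTop (𝓝 0) := by
    have h := (tendsto_const_div_atTop_nhds_zero_nat (2 * γ)).sqrt
    rw [sqrt_zero] at h
    exact h.congr fun n => (hr n).symm
  have hnr : ∀ᶠ n : ℕ in atTop, (n : ℝ) * r n ^ 2 = 2 * γ := by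
    filter_upwards [eventually_ne_atTop 0] with n hn
    rw [hr, sq_sqrt (by positivity)]
    field_simp
  have hr_ne : ∀ᶠ n : ℕ in atTop, r n ≠ 0 := by
    filter_upwards [eventually_ne_atTop 0] with n hn
    rw [hr]
    positivity
  rw [show R = _ from funext hR] at hα
  have hRne := hr0.half_mul_mul_sqrt_sub_sq_mul (b := a₃ ^ 2) hs hr_ne
  have hre := (hr0.mul_sq_half_mul_mul_sqrt_sub_sq_mul (b := a₃ ^ 2) hs.le hnr).mul_cosh_sub_one hRne
  have him := (tendsto_sinh_div_self.comp hRne).const_mul (γ * a₃)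
  convert hre.ofReal.sub (him.ofReal.const_mul Complex.I) |>.congr' ?_ using 2
  · push_cast
    ring
  filter_upwards [hnr] with n hn
  rw [hα]
  exact (natCast_mul_sub_I_mul_sq_mul_div_sub_one hn).symm
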